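/- Let φ₀ > 0 and define P₀(θ) = -θ log(1+e^{-φ₀}) - log(1+e^{θφ₀}) for θ < -1, P₀(-1) = 0, and P₀(θ) = -(θ+1) log 2 for θ > -1. Then P₀ is concave on ℝ; its derivative on (-∞,-1) is θ ↦ -log(1+e^{-φ₀}) - φ₀/(1+e^{-θφ₀}), which is decreasing, and the left limit of P₀' at -1 is strictly greater than -log 2. -/

import Mathlib

noncomputable def P0 (φ₀ θ : ℝ) : ℝ :=
  if θ < -1 then -θ * Real.log (1 + Real.exp (-φ₀)) - Real.log (1 + Real.exp (θ * φ₀))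
  else if θ = -1 then 0
  else -(θ + 1) * Real.log 2

/-!
The left branch `f θ = -θ log (1 + e^{-φ₀}) - log (1 + e^{θ φ₀})` is strictly concave on all of `ℝ`,
with `f (-1) = 0` and `f 0 = -log 2`. Its chord over `[-1, 0]` therefore has slope `-log 2`, so
`f' (-1) > -log 2`. Consequently the right branch, the line of slope `-log 2` through `(-1, 0)`,
lies above `f` on `θ ≤ -1`, and every tangent of `f` at a point `a ≤ -1` lies above the right
branch. Thus `P₀` has a supporting line at every point, which makes it concave.
-/

open Real Set

theorem concaveOn_of_forall_exists_le_affine {E : Type*} [AddCommGroup E] [Module ℝ E]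
    {s : Set E} {f : E → ℝ} (hs : Convex ℝ s)
    (h : ∀ a ∈ s, ∃ ℓ : E →ₗ[ℝ] ℝ, ∀ x ∈ s, f x ≤ f a + ℓ (x - a)) : ConcaveOn ℝ s f := by
  refine ⟨hs, fun x hx y hy t u ht hu htu => ?_⟩
  set p := t • x + u • y
  obtain ⟨ℓ, hℓ⟩ := h p (hs hx hy ht hu htu)
  have hcomb : t • (x - p) + u • (y - p) = 0 := by
    linear_combination (norm := module) htu • (-p)
  have hℓcomb : t * ℓ (x - p) + u * ℓ (y - p) = 0 := by
    simpa using congrArg ℓ hcomb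
  have hfp : t * f p + u * f p = f p := by rw [← add_mul, htu, one_mul]
  simp only [smul_eq_mul]
  linarith [mul_le_mul_of_nonneg_left (hℓ x hx) ht, mul_le_mul_of_nonneg_left (hℓ y hy) hu]

theorem ConcaveOn.le_add_mul_sub_of_hasDerivAt {S : Set ℝ} {f : ℝ → ℝ} {f' a x : ℝ}
    (hf : ConcaveOn ℝ S f) (ha : a ∈ S) (hx : x ∈ S) (hf' : HasDerivAt f f' a) :
    f x ≤ f a + f' * (x - a) := by
  rcases lt_trichotomy x a with hxa | rfl | hax
  · have := hf.le_slope_of_hasDerivAt hx ha hxa hf'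
    rw [slope_def_field, le_div_iff₀ (sub_pos.2 hxa)] at this
    linarith
  · simp
  · have := hf.slope_le_of_hasDerivAt ha hx hax hf'
    rw [slope_def_field, div_le_iff₀ (sub_pos.2 hax)] at this
    linarith

noncomputable def P0Left (φ₀ θ : ℝ) : ℝ :=
  -θ * log (1 + exp (-φ₀)) - log (1 + exp (θ * φ₀))

noncomputable def P0Left' (φ₀ θ : ℝ) : ℝ :=
  -log (1 + exp (-φ₀)) - φ₀ / (1 + exp (-θ * φ₀))

section

variable {φ₀ θ a : ℝ}

theorem hasDerivAt_P0Left (φ₀ θ : ℝ) : HasDerivAt (P0Left φ₀) (P0Left' φ₀ θ) θ := by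
  have hlin : HasDerivAt (fun t : ℝ => -t * log (1 + exp (-φ₀))) (-log (1 + exp (-φ₀))) θ := by
    simpa using (hasDerivAt_neg θ).mul_const (log (1 + exp (-φ₀)))
  have hlog : HasDerivAt (fun t : ℝ => log (1 + exp (t * φ₀)))
      (exp (θ * φ₀) * φ₀ / (1 + exp (θ * φ₀))) θ := by
    simpa using (((hasDerivAt_mul_const φ₀).exp).const_add 1).log (by positivity)
  refine (hlin.sub hlog).congr_deriv ?_
  have hinv : exp (-θ * φ₀) = (exp (θ * φ₀))⁻¹ := by rw [neg_mul, exp_neg]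
  rw [P0Left', hinv]
  field_simp
  ring

theorem strictAnti_P0Left' (hφ₀ : 0 < φ₀) : StrictAnti (P0Left' φ₀) := by
  intro a b hab
  have hexp : exp (-b * φ₀) < exp (-a * φ₀) := exp_lt_exp.2 (by nlinarith)
  have : φ₀ / (1 + exp (-a * φ₀)) < φ₀ / (1 + exp (-b * φ₀)) :=
    div_lt_div_of_pos_left hφ₀ (by positivity) (by linarith)
  simp only [P0Left']
  linarith

theorem strictConcaveOn_P0Left (hφ₀ : 0 < φ₀) : StrictConcaveOn ℝ univ (P0Left φ₀) := by
  have hderiv : deriv (P0Left φ₀) = P0Left' φ₀ := funext fun θ => (hasDerivAt_P0Left φ₀ θ).deriv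
  refine StrictAnti.strictConcaveOn_univ_of_deriv ?_ (hderiv ▸ strictAnti_P0Left' hφ₀)
  exact continuous_iff_continuousAt.2 fun θ => (hasDerivAt_P0Left φ₀ θ).continuousAt

theorem P0Left_neg_one (φ₀ : ℝ) : P0Left φ₀ (-1) = 0 := by
  simp [P0Left]

theorem P0Left_zero (φ₀ : ℝ) : P0Left φ₀ 0 = -log 2 := by
  norm_num [P0Left, one_add_one_eq_two]

theorem neg_log_two_lt_P0Left'_neg_one (hφ₀ : 0 < φ₀) : -log 2 < P0Left' φ₀ (-1) := by
  have := (strictConcaveOn_P0Left hφ₀).slope_lt_of_hasDerivAt (mem_univ _) (mem_univ _)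
    neg_one_lt_zero (hasDerivAt_P0Left φ₀ (-1))
  simpa [slope_def_field, P0Left_neg_one, P0Left_zero] using this

theorem P0_of_le (hθ : θ ≤ -1) : P0 φ₀ θ = P0Left φ₀ θ := by
  rcases hθ.lt_or_eq with hθ | rfl
  · rw [P0, if_pos hθ, P0Left]
  · simp [P0, P0Left_neg_one]

theorem P0_of_ge (hθ : -1 ≤ θ) : P0 φ₀ θ = -(θ + 1) * log 2 := by
  rcases hθ.lt_or_eq with hθ | rfl
  · rw [P0, if_neg hθ.not_gt, if_neg hθ.ne']
  · simp [P0]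

theorem P0Left_le_neg_add_one_mul_log_two (hφ₀ : 0 < φ₀) (hθ : θ ≤ -1) :
    P0Left φ₀ θ ≤ -(θ + 1) * log 2 := by
  have htangent := (strictConcaveOn_P0Left hφ₀).concaveOn.le_add_mul_sub_of_hasDerivAt
    (mem_univ _) (mem_univ θ) (hasDerivAt_P0Left φ₀ (-1))
  rw [P0Left_neg_one] at htangent
  nlinarith [neg_log_two_lt_P0Left'_neg_one hφ₀]

theorem P0_le_neg_add_one_mul_log_two (hφ₀ : 0 < φ₀) (θ : ℝ) :
    P0 φ₀ θ ≤ -(θ + 1) * log 2 := by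
  rcases le_total θ (-1) with hθ | hθ
  · exact (P0_of_le hθ).trans_le (P0Left_le_neg_add_one_mul_log_two hφ₀ hθ)
  · rw [P0_of_ge hθ]

theorem P0_le_tangent_P0Left (hφ₀ : 0 < φ₀) (ha : a ≤ -1) (θ : ℝ) :
    P0 φ₀ θ ≤ P0Left φ₀ a + P0Left' φ₀ a * (θ - a) := by
  have hconcave := (strictConcaveOn_P0Left hφ₀).concaveOn
  rcases le_total θ (-1) with hθ | hθ
  · rw [P0_of_le hθ]
    exact hconcave.le_add_mul_sub_of_hasDerivAt (mem_univ _) (mem_univ _) (hasDerivAt_P0Left φ₀ a)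
  · have hat : P0Left φ₀ (-1) ≤ P0Left φ₀ a + P0Left' φ₀ a * (-1 - a) :=
      hconcave.le_add_mul_sub_of_hasDerivAt (mem_univ _) (mem_univ _) (hasDerivAt_P0Left φ₀ a)
    have hslope : -log 2 < P0Left' φ₀ a :=
      (neg_log_two_lt_P0Left'_neg_one hφ₀).trans_le ((strictAnti_P0Left' hφ₀).antitone ha)
    rw [P0Left_neg_one] at hat
    rw [P0_of_ge hθ]
    nlinarith

theorem concaveOn_P0 (hφ₀ : 0 < φ₀) : ConcaveOn ℝ univ (P0 φ₀) := by
  refine concaveOn_of_forall_exists_le_affine convex_univ fun a _ => ?_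
  rcases le_total a (-1) with ha | ha
  · refine ⟨P0Left' φ₀ a • LinearMap.id, fun θ _ => ?_⟩
    simpa [P0_of_le ha] using P0_le_tangent_P0Left hφ₀ ha θ
  · refine ⟨-log 2 • LinearMap.id, fun θ _ => ?_⟩
    have := P0_le_neg_add_one_mul_log_two hφ₀ θ
    simp only [P0_of_ge ha, LinearMap.smul_apply, LinearMap.id_apply, smul_eq_mul]
    linarith

end

theorem stmt_13 (φ₀ : ℝ) (hφ₀ : 0 < φ₀) :
    ConcaveOn ℝ Set.univ (P0 φ₀) ∧
    (∀ θ < (-1:ℝ), HasDerivAt (P0 φ₀)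
        (- Real.log (1 + Real.exp (-φ₀)) - φ₀ / (1 + Real.exp (-θ * φ₀))) θ) ∧
    StrictAntiOn (fun θ : ℝ => - Real.log (1 + Real.exp (-φ₀)) - φ₀ / (1 + Real.exp (-θ * φ₀)))
      (Set.Iio (-1:ℝ)) ∧
    - Real.log (1 + Real.exp (-φ₀)) - φ₀ / (1 + Real.exp φ₀) > - Real.log 2 := by
  refine ⟨concaveOn_P0 hφ₀, fun θ hθ => ?_, (strictAnti_P0Left' hφ₀).strictAntiOn _, ?_⟩
  · have hP0 : P0 φ₀ =ᶠ[nhds θ] P0Left φ₀ :=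
      Filter.eventually_of_mem (Iio_mem_nhds hθ) fun t ht => P0_of_le (le_of_lt ht)
    exact (hasDerivAt_P0Left φ₀ θ).congr_of_eventuallyEq hP0
  · simpa [P0Left'] using neg_log_two_lt_P0Left'_neg_one hφ₀
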